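/- arXiv:1004.1752 — 8 statements merged into one kernel-verified Lean document; each statement's English description precedes it below -/
import Mathlib

section
/- Let q be a prime power and let F be a finite field with exactly q^2 elements. Then the number of pairs (x,y) in F × F satisfying y^q + y = x^{q+1} is exactly q^3. (That is, the affine Hermitian curve over F has exactly q^3 rational points.) -/
/-!
Write `q = p ^ k` and `T y = y ^ q + y`, an additive map since `F` has characteristic `p`. Its
kernel consists of roots of `X ^ q + X` and its image of roots of `X ^ q - X` (because
`y ^ (q ^ 2) = y`), so both have at most `q` elements. Since `|ker T| * |im T| = |F| = q ^ 2`,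
both have exactly `q` elements, so `im T = {z | z ^ q = z}` and every such `z` has exactly `q`
preimages. The norm `x ^ (q + 1)` lies in `im T` for each of the `q ^ 2` values of `x`, which
gives `q ^ 3` points.
-/

open Polynomial

theorem ncard_setOf_pow_add_mul_eq_zero_le {R : Type*} [CommRing R] [IsDomain R]
    [Finite R] {q : ℕ} (hq : 1 < q) (a : R) : {y : R | y ^ q + a * y = 0}.ncard ≤ q := by
  classical
  have := Fintype.ofFinite R
  have hdeg : (X ^ q + C a * X : R[X]).natDegree = q := by
    rw [natDegree_add_eq_left_of_natDegree_lt] <;> rw [natDegree_X_pow]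
    exact ((natDegree_C_mul_le a X).trans natDegree_X_le).trans_lt hq
  have hne : (X ^ q + C a * X : R[X]) ≠ 0 := fun h => by
    rw [h, natDegree_zero] at hdeg; omega
  rw [Set.ncard_eq_toFinset_card', Set.toFinset_ofPred, ← hdeg]
  refine card_le_degree_of_subset_roots fun y hy => ?_
  simp_all [mem_roots hne]

theorem ncard_setOf_pow_eq_self_le {R : Type*} [CommRing R] [IsDomain R] [Finite R]
    {q : ℕ} (hq : 1 < q) : {y : R | y ^ q = y}.ncard ≤ q := by
  have h : {y : R | y ^ q = y} = {y | y ^ q + -1 * y = 0} := by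
    ext y
    simp [← sub_eq_add_neg, sub_eq_zero]
  exact h ▸ ncard_setOf_pow_add_mul_eq_zero_le hq (-1)

theorem FiniteField.pow_succ_pow_of_card_eq_sq {F : Type*} [Field F] [Fintype F] {q : ℕ}
    (hF : Fintype.card F = q ^ 2) (x : F) : (x ^ (q + 1)) ^ q = x ^ (q + 1) := by
  rw [← pow_mul, add_one_mul, ← sq, ← hF, pow_add, FiniteField.pow_card, ← pow_succ']

section FrobeniusTrace

variable (F : Type*) [Field F] (p k : ℕ) [ExpChar F p]

/-- `y ↦ y ^ q + y` for `q = p ^ k`; when `F` has `q ^ 2` elements, this is the trace of `F` over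
its subfield with `q` elements. -/
def frobeniusTrace : F →+ F := (iterateFrobenius F p k).toAddMonoidHom + AddMonoidHom.id F

variable {F p k}

@[simp]
theorem frobeniusTrace_apply (y : F) : frobeniusTrace F p k y = y ^ p ^ k + y := rfl

variable [Fintype F]

theorem card_ker_frobeniusTrace_le (hq : 1 < p ^ k) :
    Nat.card (frobeniusTrace F p k).ker ≤ p ^ k := by
  have hker : ((frobeniusTrace F p k).ker : Set F) = {y | y ^ p ^ k + 1 * y = 0} := by
    ext y
    simp
  rw [← SetLike.coe_sort_coe, Nat.card_coe_set_eq, hker]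
  exact ncard_setOf_pow_add_mul_eq_zero_le hq 1

theorem card_ker_frobeniusTrace_mul_card_range :
    Nat.card (frobeniusTrace F p k).ker * Nat.card (frobeniusTrace F p k).range =
      Fintype.card F := by
  rw [← AddSubgroup.index_ker, AddSubgroup.card_mul_index, Nat.card_eq_fintype_card]

theorem range_frobeniusTrace_subset (hF : Fintype.card F = (p ^ k) ^ 2) :
    ((frobeniusTrace F p k).range : Set F) ⊆ {z | z ^ p ^ k = z} := by
  rintro _ ⟨y, rfl⟩
  rw [frobeniusTrace_apply, Set.mem_ofPred_eq, add_pow_expChar_pow, ← pow_mul, ← sq, ← hF,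
    FiniteField.pow_card, add_comm]

theorem card_range_frobeniusTrace (hq : 1 < p ^ k) (hF : Fintype.card F = (p ^ k) ^ 2) :
    Nat.card (frobeniusTrace F p k).range = p ^ k := by
  refine le_antisymm ?_ (Nat.le_of_mul_le_mul_left ?_ (zero_lt_one.trans hq))
  · rw [← SetLike.coe_sort_coe, Nat.card_coe_set_eq]
    exact (Set.ncard_le_ncard (range_frobeniusTrace_subset hF)).trans
      (ncard_setOf_pow_eq_self_le hq)
  · rw [← sq, ← hF, ← card_ker_frobeniusTrace_mul_card_range (p := p) (k := k)]
    exact Nat.mul_le_mul_right _ (card_ker_frobeniusTrace_le hq)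

theorem card_ker_frobeniusTrace (hq : 1 < p ^ k) (hF : Fintype.card F = (p ^ k) ^ 2) :
    Nat.card (frobeniusTrace F p k).ker = p ^ k := by
  refine Nat.eq_of_mul_eq_mul_right (zero_lt_one.trans hq) ?_
  rw [← sq, ← hF, ← card_ker_frobeniusTrace_mul_card_range (p := p) (k := k),
    card_range_frobeniusTrace hq hF]

theorem coe_range_frobeniusTrace (hq : 1 < p ^ k) (hF : Fintype.card F = (p ^ k) ^ 2) :
    ((frobeniusTrace F p k).range : Set F) = {z | z ^ p ^ k = z} := by
  refine Set.eq_of_subset_of_ncard_le (range_frobeniusTrace_subset hF) ?_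
  have hcard := card_range_frobeniusTrace hq hF
  rw [← SetLike.coe_sort_coe, Nat.card_coe_set_eq] at hcard
  rw [hcard]
  exact ncard_setOf_pow_eq_self_le hq

theorem card_frobeniusTrace_fiber (hq : 1 < p ^ k) (hF : Fintype.card F = (p ^ k) ^ 2) {z : F}
    (hz : z ^ p ^ k = z) : Nat.card {y : F // frobeniusTrace F p k y = z} = p ^ k := by
  classical
  have hmem : z ∈ Set.range (frobeniusTrace F p k) := by
    rwa [← AddMonoidHom.coe_range, coe_range_frobeniusTrace hq hF]
  rw [Nat.card_eq_fintype_card, Fintype.card_subtype,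
    AddMonoidHom.card_fiber_eq_of_mem_range _ hmem ⟨0, map_zero _⟩, ← Fintype.card_subtype,
    ← Nat.card_eq_fintype_card, ← card_ker_frobeniusTrace hq hF]
  exact Nat.card_congr (Equiv.subtypeEquivRight fun _ => AddMonoidHom.mem_ker.symm)

end FrobeniusTrace

/-- The affine Hermitian curve `y^q + y = x^(q+1)` over the finite field `F`
with `q^2` elements has exactly `q^3` rational points. -/
theorem hermitian_affine_point_count (q : ℕ) (hq : IsPrimePow q)
    (F : Type*) [Field F] [Fintype F] (hF : Fintype.card F = q ^ 2) :
    Nat.card {p : F × F // p.2 ^ q + p.2 = p.1 ^ (q + 1)} = q ^ 3 := by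
  obtain ⟨p, k, hp, hk, rfl⟩ := hq
  have := Fact.mk hp.nat_prime
  have : CharP F p := charP_of_card_eq_prime_pow (hF.trans (pow_mul p k 2).symm)
  have hq : 1 < p ^ k := Nat.one_lt_pow hk.ne' hp.nat_prime.one_lt
  calc _ = Nat.card (Σ x : F, {y : F // frobeniusTrace F p k y = x ^ (p ^ k + 1)}) :=
        Nat.card_congr (Equiv.subtypeProdEquivSigmaSubtype fun x y => _)
    _ = ∑ _x : F, p ^ k := by
        rw [Nat.card_sigma]
        exact Finset.sum_congr rfl fun x _ =>
          card_frobeniusTrace_fiber hq hF (FiniteField.pow_succ_pow_of_card_eq_sq hF x)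
    _ = (p ^ k) ^ 3 := by
        rw [Finset.sum_const, Finset.card_univ, hF, smul_eq_mul]
        ring
end

section
/- Let F be a field and let q ≥ 1 be an integer. In the quotient ring F[X,Y]/(Y^q + Y − X^{q+1}), the images of the monomials X^i Y^j for integers 0 ≤ i ≤ q and j ≥ 0 form a basis of the quotient as an F-vector space. -/
/-- The ideal generated by `Y^q + Y - X^(q+1)` in `F[X,Y]`. -/
noncomputable def hermitianIdeal (F : Type*) [Field F] (q : ℕ) : Ideal (MvPolynomial (Fin 2) F) :=
  Ideal.span {(MvPolynomial.X 1 : MvPolynomial (Fin 2) F) ^ q + MvPolynomial.X 1 -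
    (MvPolynomial.X 0) ^ (q + 1)}

/-- The image of the monomial `X^i Y^j` in the quotient ring
`F[X,Y]/(Y^q + Y - X^(q+1))`, indexed by pairs `(i,j)` with `0 ≤ i ≤ q`. -/
noncomputable def hermitianMonomial (F : Type*) [Field F] (q : ℕ) (p : {p : ℕ × ℕ // p.1 ≤ q}) :
    MvPolynomial (Fin 2) F ⧸ hermitianIdeal F q :=
  Ideal.Quotient.mk (hermitianIdeal F q)
    ((MvPolynomial.X 0) ^ p.1.1 * (MvPolynomial.X 1) ^ p.1.2)

/-!
Identify `F[X,Y]` with `F[Y][X]`. There `Y^q + Y - X^(q+1)` becomes, up to sign, a polynomial in `X`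
that is monic of degree `q + 1` over `F[Y]`, so the quotient is `F[Y]`-free on `1, x, …, x^q`
(the power basis of `AdjoinRoot`). Combining this with the monomial basis of `F[Y]` over `F`
gives the `F`-basis `x^i y^j`.
-/

open Polynomial

namespace MvPolynomial

variable (R : Type*) [CommSemiring R]

noncomputable def finTwoEquivPolynomialPolynomial : MvPolynomial (Fin 2) R ≃ₐ[R] R[X][X] :=
  (finSuccEquiv R 1).trans
    (Polynomial.mapAlgEquiv
      ((finSuccEquiv R 0).trans (Polynomial.mapAlgEquiv (isEmptyAlgEquiv R (Fin 0)))))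

@[simp]
theorem finTwoEquivPolynomialPolynomial_X_zero :
    finTwoEquivPolynomialPolynomial R (X 0) = Polynomial.X := by
  simp [finTwoEquivPolynomialPolynomial, finSuccEquiv_X_zero]

@[simp]
theorem finTwoEquivPolynomialPolynomial_X_one :
    finTwoEquivPolynomialPolynomial R (X 1) = Polynomial.C Polynomial.X := by
  rw [finTwoEquivPolynomialPolynomial, AlgEquiv.trans_apply,
    show (1 : Fin 2) = Fin.succ 0 from rfl, finSuccEquiv_X_succ, Polynomial.coe_mapAlgEquiv,
    Polynomial.map_C]
  simp [finSuccEquiv_X_zero]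

end MvPolynomial

namespace AdjoinRoot

variable {R : Type*} [CommRing R] {g : R[X][X]}

noncomputable def monomialBasis (hg : g.Monic) :
    Module.Basis (ℕ × Fin g.natDegree) R (AdjoinRoot g) :=
  (basisMonomials R).smulTower (powerBasis' hg).basis

theorem monomialBasis_apply (hg : g.Monic) (j : ℕ) (i : Fin g.natDegree) :
    monomialBasis hg (j, i) = mk g (C (X ^ j) * X ^ (i : ℕ)) := by
  erw [monomialBasis, Module.Basis.smulTower_apply, PowerBasis.basis_eq_pow, powerBasis'_gen]
  change (monomial j 1 : R[X]) • root g ^ (i : ℕ) = _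
  rw [← X_pow_eq_monomial, ← mk_X, ← map_pow, smul_mk, smul_eq_C_mul]

end AdjoinRoot

/-- `d` is kept apart from `n + 1`: the degree it stands for is only propositionally `n + 1`. -/
def prodFinEquivSubtypeFstLe {d : ℕ} (n : ℕ) (hd : d = n + 1) :
    ℕ × Fin d ≃ {p : ℕ × ℕ // p.1 ≤ n} where
  toFun x := ⟨(x.2, x.1), by omega⟩
  invFun p := (p.1.2, ⟨p.1.1, by omega⟩)

section Hermitian

variable (F : Type*) [Field F] (q : ℕ)

noncomputable def hermitianPolynomial : F[X][X] :=
  X ^ (q + 1) - C (X ^ q + X)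

theorem monic_hermitianPolynomial : (hermitianPolynomial F q).Monic :=
  monic_X_pow_sub_C _ q.succ_ne_zero

theorem natDegree_hermitianPolynomial : (hermitianPolynomial F q).natDegree = q + 1 :=
  natDegree_X_pow_sub_C

theorem map_hermitianIdeal :
    (hermitianIdeal F q).map (MvPolynomial.finTwoEquivPolynomialPolynomial F) =
      Ideal.span {hermitianPolynomial F q} := by
  rw [hermitianIdeal, Ideal.map_span, Set.image_singleton, ← Ideal.span_singleton_neg]
  congr 2
  simp only [map_sub, map_add, map_pow, MvPolynomial.finTwoEquivPolynomialPolynomial_X_zero,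
    MvPolynomial.finTwoEquivPolynomialPolynomial_X_one, hermitianPolynomial]
  ring

noncomputable def hermitianQuotientEquiv :
    (MvPolynomial (Fin 2) F ⧸ hermitianIdeal F q) ≃ₐ[F] AdjoinRoot (hermitianPolynomial F q) :=
  Ideal.quotientEquivAlg _ _ (MvPolynomial.finTwoEquivPolynomialPolynomial F)
    (map_hermitianIdeal F q).symm

theorem hermitianQuotientEquiv_hermitianMonomial (p : {p : ℕ × ℕ // p.1 ≤ q}) :
    hermitianQuotientEquiv F q (hermitianMonomial F q p) =
      AdjoinRoot.monomialBasis (monic_hermitianPolynomial F q)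
        ((prodFinEquivSubtypeFstLe q (natDegree_hermitianPolynomial F q)).symm p) := by
  rw [AdjoinRoot.monomialBasis_apply]
  change AdjoinRoot.mk _ (MvPolynomial.finTwoEquivPolynomialPolynomial F _) = _
  simp only [map_mul, map_pow, MvPolynomial.finTwoEquivPolynomialPolynomial_X_zero,
    MvPolynomial.finTwoEquivPolynomialPolynomial_X_one]
  exact mul_comm _ _

noncomputable def hermitianBasis :
    Module.Basis {p : ℕ × ℕ // p.1 ≤ q} F (MvPolynomial (Fin 2) F ⧸ hermitianIdeal F q) :=
  ((AdjoinRoot.monomialBasis (monic_hermitianPolynomial F q)).map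
    (hermitianQuotientEquiv F q).symm.toLinearEquiv).reindex
      (prodFinEquivSubtypeFstLe q (natDegree_hermitianPolynomial F q))

theorem coe_hermitianBasis : ⇑(hermitianBasis F q) = hermitianMonomial F q := by
  ext p
  rw [hermitianBasis, Module.Basis.reindex_apply, Module.Basis.map_apply,
    ← hermitianQuotientEquiv_hermitianMonomial]
  exact (hermitianQuotientEquiv F q).symm_apply_apply _

end Hermitian

theorem hermitian_monomials_basis_general (F : Type*) [Field F] (q : ℕ) :
    LinearIndependent F (hermitianMonomial F q) ∧
      Submodule.span F (Set.range (hermitianMonomial F q)) = ⊤ := by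
  rw [← coe_hermitianBasis]
  exact ⟨(hermitianBasis F q).linearIndependent, (hermitianBasis F q).span_eq⟩

/-- In `F[X,Y]/(Y^q + Y - X^(q+1))`, the images of the monomials `X^i Y^j` with
`0 ≤ i ≤ q` and `j ≥ 0` form an `F`-vector space basis of the quotient. -/
theorem hermitian_monomials_basis (F : Type*) [Field F] (q : ℕ) (hq : 1 ≤ q) :
    LinearIndependent F (hermitianMonomial F q) ∧
      Submodule.span F (Set.range (hermitianMonomial F q)) = ⊤ :=
  hermitian_monomials_basis_general F q
end

section
/- One-point coset bound for Hermitian codes (Corollary 2, part 1, in concrete form). Let q be a prime power, F a finite field with q^2 elements, and S = {(x,y) ∈ F × F : y^q + y = x^{q+1}} (so |S| = q^3). For an integer i, let E(i) ⊆ F^S be the F-linear span of the evaluation vectors ((P ↦ x(P)^α y(P)^β))_{P ∈ S} over all integers α, β with 0 ≤ α ≤ q, β ≥ 0 and qα + (q+1)β ≤ i. Let i be an integer and write i = (d+q−2)(q+1) − a for the unique integers d ∈ ℤ and 0 ≤ a ≤ q. Suppose c ∈ F^S satisfies c·v = 0 for every v ∈ E(i), but c·w ≠ 0 for some w ∈ E(i+1).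 Then the Hamming weight of c is at least (q+1)d − a if a − d < 0, and at least a(q − a + d) if 0 ≤ a − d ≤ q−1. -/
/-- The affine points of the Hermitian curve `y^q + y = x^(q+1)` over `F`. -/
abbrev HermitianPoints (q : ℕ) (F : Type*) [Field F] : Type _ :=
  {p : F × F // p.2 ^ q + p.2 = p.1 ^ (q + 1)}

/-- The one-point evaluation code `C_L(D, iP)`: the `F`-span in `F^S` of the
evaluations of the monomials `x^α y^β` with `0 ≤ α ≤ q`, `β ≥ 0` and
pole order `qα + (q+1)β ≤ i` at the point at infinity. -/
def hermitianOnePointCode (q : ℕ) (F : Type*) [Field F] (i : ℤ) :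
    Submodule F (HermitianPoints q F → F) :=
  Submodule.span F {v | ∃ α β : ℕ, α ≤ q ∧ ((q : ℤ) * α + (q + 1) * β ≤ i) ∧
    v = fun P => (P.1.1) ^ α * (P.1.2) ^ β}

lemma hcode_mono (q : ℕ) (F : Type*) [Field F] {i j : ℤ} (h : i ≤ j) :
    hermitianOnePointCode q F i ≤ hermitianOnePointCode q F j := by
  apply Submodule.span_mono
  rintro v ⟨α, β, hα, hle, rfl⟩
  exact ⟨α, β, hα, le_trans hle h, rfl⟩

/-- pointwise reduction identity on the curve -/
lemma herm_pointwise (q : ℕ) (F : Type*) [Field F] (P : HermitianPoints q F) (α β : ℕ) :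
    P.1.1 ^ (α + (q+1)) * P.1.2 ^ β
      = P.1.1 ^ α * P.1.2 ^ (β + q) + P.1.1 ^ α * P.1.2 ^ (β + 1) := by
  have h := P.2
  rw [pow_add _ α (q+1), ← h]
  ring

lemma monomial_mem (q : ℕ) (hq : 1 ≤ q) (F : Type*) [Field F] :
    ∀ α β : ℕ, (fun P : HermitianPoints q F => P.1.1 ^ α * P.1.2 ^ β) ∈
      hermitianOnePointCode q F ((q : ℤ) * α + (q + 1) * β) := by
  intro α
  induction α using Nat.strong_induction_on with
  | _ α ih =>
    intro β
    by_cases hα : α ≤ q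
    · exact Submodule.subset_span ⟨α, β, hα, le_refl _, rfl⟩
    · push_neg at hα
      obtain ⟨α', rfl⟩ : ∃ α', α = α' + (q+1) := ⟨α - (q+1), by omega⟩
      have h1 := ih α' (by omega) (β + q)
      have h2 := ih α' (by omega) (β + 1)
      have heq : (fun P : HermitianPoints q F => P.1.1 ^ (α' + (q+1)) * P.1.2 ^ β)
          = (fun P : HermitianPoints q F => P.1.1 ^ α' * P.1.2 ^ (β + q))
            + (fun P : HermitianPoints q F => P.1.1 ^ α' * P.1.2 ^ (β + 1)) := by
        funext P
        exact herm_pointwise q F P α' β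
      rw [heq]
      apply Submodule.add_mem
      · have h3 : ((q:ℤ) * ↑(α' + (q+1)) + (q+1) * ↑β) = ((q:ℤ) * ↑α' + (q+1) * ↑(β + q)) := by
          push_cast; ring
        rw [h3]
        exact h1
      · refine hcode_mono q F ?_ h2
        have hq' : (1:ℤ) ≤ q := by exact_mod_cast hq
        push_cast
        nlinarith

section Sums
variable {q : ℕ} {F : Type*} [Field F] [Fintype F] [DecidableEq F]

/-- vanishing of monomial sums of pole order ≤ i -/
lemma esum_zero {i : ℤ} {c : HermitianPoints q F → F}
    (hq : 1 ≤ q)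
    (hker : ∀ v ∈ hermitianOnePointCode q F i, ∑ P, c P * v P = 0)
    (α β : ℕ) (h : (q : ℤ) * α + (q + 1) * β ≤ i) :
    ∑ P, c P * (P.1.1 ^ α * P.1.2 ^ β) = 0 :=
  hker _ (hcode_mono q F h (monomial_mem q hq F α β))

/-- all monomial sums of pole order exactly i+1 agree -/
lemma esum_const {i : ℤ} {c : HermitianPoints q F → F}
    (hq : 2 ≤ q)
    (hker : ∀ v ∈ hermitianOnePointCode q F i, ∑ P, c P * v P = 0) :
    ∀ n (α β α' β' : ℕ), α + α' ≤ n →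
      (q : ℤ) * α + (q + 1) * β = i + 1 → (q : ℤ) * α' + (q + 1) * β' = i + 1 →
      ∑ P, c P * (P.1.1 ^ α * P.1.2 ^ β) = ∑ P, c P * (P.1.1 ^ α' * P.1.2 ^ β') := by
  have hq1 : 1 ≤ q := by omega
  -- a one-step reduction
  have step : ∀ (α β : ℕ), (q : ℤ) * (α + (q+1) : ℕ) + (q + 1) * β = i + 1 →
      ∑ P, c P * (P.1.1 ^ (α + (q+1)) * P.1.2 ^ β)
        = ∑ P, c P * (P.1.1 ^ α * P.1.2 ^ (β + q)) := by
    intro α β hpole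
    have hsplit : ∑ P, c P * (P.1.1 ^ (α + (q+1)) * P.1.2 ^ β)
        = (∑ P, c P * (P.1.1 ^ α * P.1.2 ^ (β + q)))
          + ∑ P, c P * (P.1.1 ^ α * P.1.2 ^ (β + 1)) := by
      rw [← Finset.sum_add_distrib]
      apply Finset.sum_congr rfl
      intro P _
      rw [herm_pointwise q F P α β]
      ring
    have hz : ∑ P, c P * (P.1.1 ^ α * P.1.2 ^ (β + 1)) = 0 := by
      apply esum_zero hq1 hker
      have hqZ : (2:ℤ) ≤ q := by exact_mod_cast hq
      push_cast at hpole ⊢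
      nlinarith
    rw [hsplit, hz, add_zero]
  intro n
  induction n with
  | zero =>
    intro α β α' β' hn h1 h2
    have : α = 0 ∧ α' = 0 := by omega
    obtain ⟨rfl, rfl⟩ := this
    have : β = β' := by
      have h3 : ((q:ℤ) + 1) * β = ((q:ℤ) + 1) * β' := by omega
      have h4 : ((q:ℤ) + 1) ≠ 0 := by positivity
      have := mul_left_cancel₀ h4 h3
      exact_mod_cast this
    rw [this]
  | succ n ih =>
    intro α β α' β' hn h1 h2
    rcases lt_trichotomy α α' with hlt | heq | hgt
    · -- α < α' : reduce α'
      have hdvd : ((q:ℤ) + 1) ∣ ((α':ℤ) - α) := by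
        have hco : IsCoprime ((q:ℤ) + 1) (q:ℤ) := ⟨1, -1, by ring⟩
        have : ((q:ℤ) + 1) ∣ (q:ℤ) * ((α':ℤ) - α) := ⟨(β:ℤ) - β', by linarith [h1, h2]⟩
        exact hco.dvd_of_dvd_mul_left this
      have hge : (q:ℤ) + 1 ≤ (α':ℤ) - α := Int.le_of_dvd (by push_cast; omega) hdvd
      obtain ⟨α'', rfl⟩ : ∃ α'', α' = α'' + (q+1) := ⟨α' - (q+1), by push_cast at hge; omega⟩
      rw [step α'' β' h2]
      apply ih α β α'' (β' + q) (by omega) h1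
      push_cast at h2 ⊢; linarith
    · subst heq
      have : β = β' := by
        have h3 : ((q:ℤ) + 1) * β = ((q:ℤ) + 1) * β' := by omega
        have h4 : ((q:ℤ) + 1) ≠ 0 := by positivity
        have := mul_left_cancel₀ h4 h3
        exact_mod_cast this
      rw [this]
    · have hdvd : ((q:ℤ) + 1) ∣ ((α:ℤ) - α') := by
        have hco : IsCoprime ((q:ℤ) + 1) (q:ℤ) := ⟨1, -1, by ring⟩
        have : ((q:ℤ) + 1) ∣ (q:ℤ) * ((α:ℤ) - α') := ⟨(β':ℤ) - β, by linarith [h1, h2]⟩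
        exact hco.dvd_of_dvd_mul_left this
      have hge : (q:ℤ) + 1 ≤ (α:ℤ) - α' := Int.le_of_dvd (by push_cast; omega) hdvd
      obtain ⟨α'', rfl⟩ : ∃ α'', α = α'' + (q+1) := ⟨α - (q+1), by push_cast at hge; omega⟩
      rw [step α'' β h1]
      apply ih α'' (β + q) α' β' (by omega) _ h2
      push_cast at h1 ⊢; linarith

end Sums

/-- injectivity of `(x,y) ↦ qx + (q+1)y` for `x ≤ q` -/
lemma rho_inj {q x y x' y' : ℕ} (hx : x ≤ q) (hx' : x' ≤ q)
    (h : q * x + (q+1) * y = q * x' + (q+1) * y') : x = x' ∧ y = y' := by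
  have hdvd : ((q:ℤ) + 1) ∣ ((x:ℤ) - x') := by
    have hco : IsCoprime ((q:ℤ) + 1) (q:ℤ) := ⟨1, -1, by ring⟩
    have hZ : (q:ℤ) * x + (q+1) * y = (q:ℤ) * x' + (q+1) * y' := by exact_mod_cast h
    have : ((q:ℤ) + 1) ∣ (q:ℤ) * ((x:ℤ) - x') := ⟨(y':ℤ) - y, by linarith⟩
    exact hco.dvd_of_dvd_mul_left this
  have hxx : (x:ℤ) = x' := by
    have := Int.eq_zero_of_abs_lt_dvd hdvd (by
      rw [abs_lt]
      constructor <;> [skip; skip] <;> push_cast <;> omega)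
    omega
  have hx2 : x = x' := by exact_mod_cast hxx
  subst hx2
  refine ⟨rfl, ?_⟩
  have : (q+1) * y = (q+1) * y' := by omega
  exact Nat.eq_of_mul_eq_mul_left (by omega) this

section Extract
variable {q : ℕ} {F : Type*} [Field F] [Fintype F] [DecidableEq F]

/-- from hnz, extract a monomial of pole order exactly i+1 with nonzero sum -/
lemma exists_good {i : ℤ} {c : HermitianPoints q F → F} (hq : 1 ≤ q)
    (hker : ∀ v ∈ hermitianOnePointCode q F i, ∑ P, c P * v P = 0)
    (hnz : ∃ w ∈ hermitianOnePointCode q F (i + 1), ∑ P, c P * w P ≠ 0) :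
    ∃ α₀ β₀ : ℕ, (q : ℤ) * α₀ + (q + 1) * β₀ = i + 1 ∧
      ∑ P, c P * (P.1.1 ^ α₀ * P.1.2 ^ β₀) ≠ 0 := by
  obtain ⟨w, hw, hwnz⟩ := hnz
  let L : (HermitianPoints q F → F) →ₗ[F] F :=
    { toFun := fun v => ∑ P, c P * v P
      map_add' := by intro u v; simp [mul_add, Finset.sum_add_distrib]
      map_smul' := by
        intro m v
        simp only [Pi.smul_apply, smul_eq_mul, RingHom.id_apply, Finset.mul_sum]
        apply Finset.sum_congr rfl
        intro P _
        ring }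
  by_contra hcon
  push_neg at hcon
  have hle : hermitianOnePointCode q F (i+1) ≤ LinearMap.ker L := by
    rw [hermitianOnePointCode, Submodule.span_le]
    rintro v ⟨α, β, hα, hpole, rfl⟩
    simp only [SetLike.mem_coe, LinearMap.mem_ker]
    show ∑ P, c P * (P.1.1 ^ α * P.1.2 ^ β) = 0
    rcases eq_or_lt_of_le hpole with heq | hlt
    · by_contra hne
      exact hne (hcon α β heq)
    · exact esum_zero hq hker α β (by omega)
  exact hwnz (hle hw)

end Extract

section Key
variable {q : ℕ} {F : Type*} [Field F] [Fintype F] [DecidableEq F]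

/-- restrict a weighted sum to the support of c -/
lemma sum_support_eq {c : HermitianPoints q F → F} (h : HermitianPoints q F → F) :
    ∑ P, c P * h P = ∑ P : {P : HermitianPoints q F // c P ≠ 0}, c P.1 * h P.1 := by
  rw [← Finset.sum_subtype (Finset.univ.filter (fun P => c P ≠ 0))
    (by intro x; simp) (fun P => c P * h P)]
  rw [Finset.sum_filter_of_ne]
  intro P _ hne hc
  exact hne (by rw [hc, zero_mul])

/-- the key coset-bound counting lemma -/
lemma key_bound {i : ℤ} {c : HermitianPoints q F → F} (hq : 2 ≤ q)
    (hker : ∀ v ∈ hermitianOnePointCode q F i, ∑ P, c P * v P = 0)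
    (hnz : ∃ w ∈ hermitianOnePointCode q F (i + 1), ∑ P, c P * w P ≠ 0)
    (ι : Type) [Fintype ι] (a1 b1 a2 b2 : ι → ℕ)
    (hsum : ∀ s, (q:ℤ) * (a1 s) + (q+1) * (b1 s) + ((q:ℤ) * (a2 s) + (q+1) * (b2 s)) = i + 1)
    (hinj : Function.Injective (fun s => q * (a1 s) + (q+1) * (b1 s))) :
    Fintype.card ι ≤ Nat.card {P : HermitianPoints q F // c P ≠ 0} := by
  have hq1 : 1 ≤ q := by omega
  obtain ⟨α₀, β₀, hpole₀, hne₀⟩ := exists_good hq1 hker hnz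
  -- every monomial of pole order i+1 has nonzero sum
  have hene : ∀ α β : ℕ, (q:ℤ) * α + (q+1) * β = i + 1 →
      ∑ P, c P * (P.1.1 ^ α * P.1.2 ^ β) ≠ 0 := by
    intro α β hpole
    rw [esum_const hq hker (α + α₀) α β α₀ β₀ le_rfl hpole hpole₀]
    exact hne₀
  set T := {P : HermitianPoints q F // c P ≠ 0}
  let v : ι → (T → F) := fun s P => c P.1 * (P.1.1.1 ^ (a1 s) * P.1.1.2 ^ (b1 s))
  have hli : LinearIndependent F v := by
    rw [Fintype.linearIndependent_iff]
    intro g hg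
    by_contra hcon
    push_neg at hcon
    obtain ⟨s₁, hs₁⟩ := hcon
    have hZ : (Finset.univ.filter (fun s => g s ≠ 0)).Nonempty :=
      ⟨s₁, by simp [hs₁]⟩
    obtain ⟨s₀, hs₀mem, hs₀max⟩ :=
      Finset.exists_max_image (Finset.univ.filter (fun s => g s ≠ 0))
        (fun s => q * (a1 s) + (q+1) * (b1 s)) hZ
    have hgs₀ : g s₀ ≠ 0 := (Finset.mem_filter.mp hs₀mem).2
    -- pair against the complementary monomial of s₀
    have hX : ∑ s, g s * ∑ P, c P * (P.1.1 ^ (a1 s + a2 s₀) * P.1.2 ^ (b1 s + b2 s₀)) = 0 := by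
      have h0 : ∀ P : T, (∑ s, g s • v s) P = 0 := by rw [hg]; intro P; rfl
      calc ∑ s, g s * ∑ P, c P * (P.1.1 ^ (a1 s + a2 s₀) * P.1.2 ^ (b1 s + b2 s₀))
          = ∑ s, g s * ∑ P : T, c P.1 * (P.1.1.1 ^ (a1 s + a2 s₀) * P.1.1.2 ^ (b1 s + b2 s₀)) := by
            apply Finset.sum_congr rfl; intro s _
            rw [sum_support_eq (fun P => P.1.1 ^ (a1 s + a2 s₀) * P.1.2 ^ (b1 s + b2 s₀))]
        _ = ∑ P : T, (∑ s, g s • v s) P * (P.1.1.1 ^ (a2 s₀) * P.1.1.2 ^ (b2 s₀)) := by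
            simp only [Finset.mul_sum]
            rw [Finset.sum_comm]
            apply Finset.sum_congr rfl; intro P _
            simp only [Finset.sum_apply, Pi.smul_apply, smul_eq_mul, Finset.sum_mul, v]
            apply Finset.sum_congr rfl; intro s _
            rw [pow_add, pow_add]
            ring
        _ = 0 := by
            apply Finset.sum_eq_zero; intro P _
            rw [h0 P, zero_mul]
    rw [Finset.sum_eq_single s₀] at hX
    · exact hgs₀ (by
        rcases mul_eq_zero.mp hX with h | h
        · exact h
        · exact absurd h (hene _ _ (by push_cast; linarith [hsum s₀])))
    · intro s _ hne
      by_cases hgs : g s = 0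
      · rw [hgs, zero_mul]
      · have hmem : s ∈ Finset.univ.filter (fun s => g s ≠ 0) := by simp [hgs]
        have hle := hs₀max s hmem
        have hltρ : q * (a1 s) + (q+1) * (b1 s) < q * (a1 s₀) + (q+1) * (b1 s₀) := by
          rcases lt_or_eq_of_le hle with h | h
          · exact h
          · exact absurd (hinj h) hne
        have hzero : ∑ P, c P * (P.1.1 ^ (a1 s + a2 s₀) * P.1.2 ^ (b1 s + b2 s₀)) = 0 := by
          apply esum_zero hq1 hker
          have h1 := hsum s₀
          have h2 : (q:ℤ) * (a1 s) + (q+1) * (b1 s) < (q:ℤ) * (a1 s₀) + (q+1) * (b1 s₀) := by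
            exact_mod_cast hltρ
          push_cast
          linarith
        rw [hzero, mul_zero]
    · intro h
      exact absurd (Finset.mem_univ s₀) h
  have hcard := hli.fintype_card_le_finrank
  rw [Module.finrank_fintype_fun_eq_card] at hcard
  rwa [Nat.card_eq_fintype_card]

end Key

/-- One-point coset bound for Hermitian codes: if `c` is orthogonal to
`C_L(D, iP)` but not to `C_L(D, (i+1)P)`, and `i = (d+q-2)(q+1) - a` with
`0 ≤ a ≤ q`, then the Hamming weight of `c` is at least `(q+1)d - a` when
`a - d < 0`, and at least `a(q - a + d)` when `0 ≤ a - d ≤ q - 1`. -/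
theorem hermitian_one_point_coset_bound (q : ℕ) (hq : IsPrimePow q)
    (F : Type*) [Field F] [Fintype F] [DecidableEq F] (hF : Fintype.card F = q ^ 2)
    (i d a : ℤ) (hi : i = (d + q - 2) * (q + 1) - a) (ha0 : 0 ≤ a) (haq : a ≤ q)
    (c : HermitianPoints q F → F)
    (hker : ∀ v ∈ hermitianOnePointCode q F i, ∑ P, c P * v P = 0)
    (hnz : ∃ w ∈ hermitianOnePointCode q F (i + 1), ∑ P, c P * w P ≠ 0) :
    (a - d < 0 →
      (q + 1) * d - a ≤ (Nat.card {P : HermitianPoints q F // c P ≠ 0} : ℤ)) ∧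
    (0 ≤ a - d ∧ a - d ≤ (q : ℤ) - 1 →
      a * (q - a + d) ≤ (Nat.card {P : HermitianPoints q F // c P ≠ 0} : ℤ)) := by
  have hq2 : 2 ≤ q := hq.two_le
  constructor
  · -- Case 1 : a < d
    intro hcase
    set D := (d - a).toNat with hDdef
    set aN := a.toNat with haNdef
    have hDZ : (D : ℤ) = d - a := Int.toNat_of_nonneg (by omega)
    have haNZ : (aN : ℤ) = a := Int.toNat_of_nonneg ha0
    have haNq : aN ≤ q := by omega
    have hD1 : 1 ≤ D := by omega
    let ι := (Fin (q+1) × Fin D) ⊕ (Fin aN × Fin q)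
    let a1 : ι → ℕ := fun s => match s with | .inl (x, _) => x.val | .inr (k, _) => k.val
    let b1 : ι → ℕ := fun s => match s with | .inl (_, y) => y.val | .inr (_, j) => D + j.val
    let a2 : ι → ℕ := fun s => match s with
      | .inl (x, _) => q + aN - x.val | .inr (k, _) => aN - 1 - k.val
    let b2 : ι → ℕ := fun s => match s with
      | .inl (_, y) => D - 1 - y.val | .inr (_, j) => q - 1 - j.val
    have hsum : ∀ s, (q:ℤ) * (a1 s) + (q+1) * (b1 s) + ((q:ℤ) * (a2 s) + (q+1) * (b2 s)) = i + 1 := by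
      rintro (⟨x, y⟩ | ⟨k, j⟩)
      · have hx := x.isLt
        have hy := y.isLt
        have e1 : ((q + aN - x.val : ℕ) : ℤ) = q + a - x.val := by omega
        have e2 : ((D - 1 - y.val : ℕ) : ℤ) = d - a - 1 - y.val := by omega
        simp only [a1, b1, a2, b2]
        rw [e1, e2, hi]; ring
      · have hk := k.isLt
        have hj := j.isLt
        have e1 : ((aN - 1 - k.val : ℕ) : ℤ) = a - 1 - k.val := by omega
        have e2 : ((q - 1 - j.val : ℕ) : ℤ) = q - 1 - j.val := by omega
        have e3 : ((D + j.val : ℕ) : ℤ) = d - a + j.val := by omega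
        simp only [a1, b1, a2, b2]
        rw [e1, e2, e3, hi]; ring
    have hinj : Function.Injective (fun s => q * (a1 s) + (q+1) * (b1 s)) := by
      rintro (⟨x, y⟩ | ⟨k, j⟩) (⟨x', y'⟩ | ⟨k', j'⟩) h <;> simp only [a1, b1] at h
      · obtain ⟨h1, h2⟩ := rho_inj (by omega) (by omega) h
        exact congrArg Sum.inl (Prod.ext (Fin.ext h1) (Fin.ext h2))
      · obtain ⟨h1, h2⟩ := rho_inj (by omega) (by omega) h
        have := y.isLt; have := j'.isLt; omega
      · obtain ⟨h1, h2⟩ := rho_inj (by omega) (by omega) h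
        have := y'.isLt; have := j.isLt; omega
      · obtain ⟨h1, h2⟩ := rho_inj (by omega) (by omega) h
        exact congrArg Sum.inr (Prod.ext (Fin.ext h1)
          (Fin.ext (show j.val = j'.val by omega)))
    have hb := key_bound hq2 hker hnz ι a1 b1 a2 b2 hsum hinj
    have hcard : Fintype.card ι = (q+1) * D + aN * q := by
      simp [ι, Fintype.card_sum, Fintype.card_prod, Fintype.card_fin]
    rw [hcard] at hb
    have hcast : (((q+1) * D + aN * q : ℕ) : ℤ) = (q+1) * d - a := by
      push_cast [hDZ, haNZ]; ring
    calc ((q:ℤ)+1) * d - a = (((q+1) * D + aN * q : ℕ) : ℤ) := by rw [hcast]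
      _ ≤ _ := by exact_mod_cast hb
  · -- Case 2 : 0 ≤ a - d ≤ q - 1
    rintro ⟨h1, h2⟩
    by_cases htriv : a = 0 ∨ q - a + d ≤ 0
    · have : a * ((q:ℤ) - a + d) ≤ 0 := by
        rcases htriv with h | h
        · rw [h, zero_mul]
        · exact mul_nonpos_of_nonneg_of_nonpos ha0 h
      calc a * ((q:ℤ) - a + d) ≤ 0 := this
        _ ≤ _ := by positivity
    · push_neg at htriv
      obtain ⟨ha1, hM1⟩ := htriv
      set aN := a.toNat with haNdef
      set M := ((q:ℤ) - a + d).toNat with hMdef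
      have haNZ : (aN : ℤ) = a := Int.toNat_of_nonneg ha0
      have hMZ : (M : ℤ) = (q:ℤ) - a + d := Int.toNat_of_nonneg (by omega)
      have haNq : aN ≤ q := by omega
      have haN1 : 1 ≤ aN := by omega
      have hM1' : 1 ≤ M := by omega
      let ι := Fin aN × Fin M
      let a1 : ι → ℕ := fun s => s.1.val
      let b1 : ι → ℕ := fun s => s.2.val
      let a2 : ι → ℕ := fun s => aN - 1 - s.1.val
      let b2 : ι → ℕ := fun s => M - 1 - s.2.val
      have hsum : ∀ s, (q:ℤ) * (a1 s) + (q+1) * (b1 s) + ((q:ℤ) * (a2 s) + (q+1) * (b2 s)) = i + 1 := by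
        rintro ⟨k, j⟩
        have hk := k.isLt
        have hj := j.isLt
        have e1 : ((aN - 1 - k.val : ℕ) : ℤ) = a - 1 - k.val := by omega
        have e2 : ((M - 1 - j.val : ℕ) : ℤ) = (q:ℤ) - a + d - 1 - j.val := by omega
        simp only [a1, b1, a2, b2]
        rw [e1, e2, hi]; ring
      have hinj : Function.Injective (fun s => q * (a1 s) + (q+1) * (b1 s)) := by
        rintro ⟨k, j⟩ ⟨k', j'⟩ h
        simp only [a1, b1] at h
        obtain ⟨hh1, hh2⟩ := rho_inj (by have := k.isLt; omega) (by have := k'.isLt; omega) h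
        exact Prod.ext (Fin.ext hh1) (Fin.ext hh2)
      have hb := key_bound hq2 hker hnz ι a1 b1 a2 b2 hsum hinj
      have hcard : Fintype.card ι = aN * M := by
        simp [ι, Fintype.card_prod, Fintype.card_fin]
      rw [hcard] at hb
      have hcast : ((aN * M : ℕ) : ℤ) = a * ((q:ℤ) - a + d) := by
        push_cast [haNZ, hMZ]; ring
      calc (a : ℤ) * ((q:ℤ) - a + d) = ((aN * M : ℕ) : ℤ) := by rw [hcast]
        _ ≤ _ := by exact_mod_cast hb
end

section
/- Two-point coset bound for Hermitian codes (Corollary 2, part 2, in concrete form). Let q be a prime power, F a finite field with q^2 elements, S = {(x,y) ∈ F × F : y^q + y = x^{q+1}}, and S* = S \ {(0,0)} (so |S*| = q^3 − 1; note y ≠ 0 at every point of S*). For an integer i, let E'(i) ⊆ F^{S*} be the F-linear span of the evaluation vectors ((P ↦ x(P)^α y(P)^β))_{P ∈ S*} over all integers α, β with 0 ≤ α ≤ q, β ≥ −1, qα + (q+1)β ≤ i, and α + (q+1)β ≥ −1. Let i be an integer and write i = (d+q−2)(q+1) − a for the unique integers d ∈ ℤ and 0 ≤ a ≤ q. Suppose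 c ∈ F^{S*} satisfies c·v = 0 for every v ∈ E'(i), but c·w ≠ 0 for some w ∈ E'(i+1). Then the Hamming weight of c is at least (q+1)d − a + 1 if a − d − 1 < 0, and at least a(q − a + d) if 0 ≤ a − d − 1 ≤ q−1. -/
/-- The affine points of the Hermitian curve `y^q + y = x^(q+1)` over `F`,
with the origin removed. -/
abbrev HermitianPoints' (q : ℕ) (F : Type*) [Field F] : Type _ :=
  {p : F × F // p.2 ^ q + p.2 = p.1 ^ (q + 1) ∧ p ≠ (0, 0)}

/-- The two-point evaluation code `C_L(D, iP + Q)`: the `F`-span in `F^{S*}` of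
the evaluations of the monomials `x^α y^β` with `0 ≤ α ≤ q`, `β ≥ -1`,
pole order `qα + (q+1)β ≤ i` at the point at infinity `P`, and
`α + (q+1)β ≥ -1` (pole order at most `1` at the origin `Q`). -/
def hermitianTwoPointCode (q : ℕ) (F : Type*) [Field F] (i : ℤ) :
    Submodule F (HermitianPoints' q F → F) :=
  Submodule.span F {v | ∃ (α : ℕ) (β : ℤ), α ≤ q ∧ -1 ≤ β ∧
    ((q : ℤ) * α + (q + 1) * β ≤ i) ∧ (-1 ≤ (α : ℤ) + (q + 1) * β) ∧
    v = fun P => (P.1.1) ^ α * (P.1.2) ^ β}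

/-!
Monomials `x^α y^β` with `α ≤ q` are determined by their pole order `qα + (q+1)β` at infinity, so
`E'(i+1)` is `E'(i)` plus the one monomial of pole order `i + 1`, and that monomial pairs
non-trivially with `c`. Rewriting `x^(q+1) = y^q + y` never raises the pole order at infinity or
at the origin, so the same holds for every monomial of pole order `i + 1` with at most a simple
pole at the origin, and every monomial of smaller pole order is in `E'(i)`.

Hence for monomials `f_j` regular at the origin and `g_j` with at most a simple pole there, with
pole orders adding up to `i + 1`, the matrix `(c ⬝ᵥ f_j g_k)` is triangular with non-zero diagonal
once the `f_j` are ordered by pole order. It factors through `diagonal c`, so the number of pairs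
is at most the weight of `c`. Both bounds come from explicit families of pairs; the one for
`a ≤ d` uses the function `x^q / y`, with a simple pole at the origin.
-/

open Matrix

theorem card_le_card_ne_zero_of_lowerTriangular {K ι X : Type*} [Field K] [DecidableEq K]
    [Fintype ι] [DecidableEq ι] [LinearOrder ι] [Fintype X] [DecidableEq X]
    (c : X → K) (f g : ι → X → K)
    (h_lt : ∀ j k, j < k → c ⬝ᵥ (f j * g k) = 0) (h_eq : ∀ j, c ⬝ᵥ (f j * g j) ≠ 0) :
    Fintype.card ι ≤ Fintype.card {x // c x ≠ 0} := by
  set M : Matrix ι ι K := of f * diagonal c * (of g)ᵀ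
  have hM : ∀ j k, M j k = c ⬝ᵥ (f j * g k) := fun j k => by
    simp only [M, mul_apply (M := of f * diagonal c), mul_diagonal, transpose_apply, of_apply,
      dotProduct, Pi.mul_apply]
    exact Finset.sum_congr rfl fun x _ => by ring
  have hdet : IsUnit M.det := by
    rw [det_of_isLowerTriangular M fun j k hkj => (hM j k).trans (h_lt j k hkj)]
    exact (Finset.prod_ne_zero_iff.2 fun j _ => (hM j j).trans_ne (h_eq j)).isUnit
  calc Fintype.card ι = M.rank := (rank_of_isUnit M ((isUnit_iff_isUnit_det M).2 hdet)).symm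
    _ ≤ (of f * diagonal c).rank := rank_mul_le_left _ _
    _ ≤ (diagonal c).rank := rank_mul_le_right _ _
    _ = Fintype.card {x // c x ≠ 0} := rank_diagonal c

namespace HermitianCurve

-- `x` and `y` have poles of orders `q` and `q + 1` at infinity and zeros of orders `1` and `q + 1`
-- at the origin.
def poleOrder (q : ℕ) (e : ℕ × ℤ) : ℤ := q * e.1 + (q + 1) * e.2

def originOrder (q : ℕ) (e : ℕ × ℤ) : ℤ := e.1 + (q + 1) * e.2

theorem poleOrder_add (q : ℕ) (e e' : ℕ × ℤ) :
    poleOrder q (e + e') = poleOrder q e + poleOrder q e' := by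
  simp only [poleOrder, Prod.fst_add, Prod.snd_add]; push_cast; ring

theorem originOrder_add (q : ℕ) (e e' : ℕ × ℤ) :
    originOrder q (e + e') = originOrder q e + originOrder q e' := by
  simp only [originOrder, Prod.fst_add, Prod.snd_add]; push_cast; ring

theorem poleOrder_injOn (q : ℕ) : Set.InjOn (poleOrder q) {e | e.1 ≤ q} := by
  rintro ⟨α, β⟩ hα ⟨α', β'⟩ hα' h
  simp only [Set.mem_ofPred_eq, poleOrder] at hα hα' h
  have hdvd : ((q : ℤ) + 1) ∣ (α : ℤ) - α' := ⟨α - α' - β' + β, by linear_combination -h⟩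
  have hαα' : (α : ℤ) - α' = 0 := Int.eq_zero_of_abs_lt_dvd hdvd (by rw [abs_lt]; omega)
  have hββ' : ((q : ℤ) + 1) * β = (q + 1) * β' := by linear_combination h - q * hαα'
  exact Prod.ext (by omega) (mul_left_cancel₀ (by positivity) hββ')

variable {q : ℕ} {F : Type*} [Field F]

theorem snd_ne_zero (hq : q ≠ 0) (P : HermitianPoints' q F) : P.1.2 ≠ 0 := by
  intro hy
  have hcurve := P.2.1
  rw [hy, zero_pow hq, add_zero] at hcurve
  exact P.2.2 (Prod.ext ((pow_eq_zero_iff q.succ_ne_zero).1 hcurve.symm) hy)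

variable (q F) in
def monomial (e : ℕ × ℤ) : HermitianPoints' q F → F :=
  fun P => P.1.1 ^ e.1 * P.1.2 ^ e.2

theorem monomial_add (hq : q ≠ 0) (e e' : ℕ × ℤ) :
    monomial q F (e + e') = monomial q F e * monomial q F e' := by
  funext P
  simp only [monomial, Prod.fst_add, Prod.snd_add, Pi.mul_apply, pow_add,
    zpow_add₀ (snd_ne_zero hq P)]
  ring

theorem monomial_reduce (α : ℕ) (β : ℤ) (hq : q ≠ 0) :
    monomial q F (α + (q + 1), β) = monomial q F (α, β + q) + monomial q F (α, β + 1) := by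
  funext P
  have hy := snd_ne_zero hq P
  simp only [monomial, Pi.add_apply]
  rw [pow_add, ← P.2.1, zpow_add₀ hy, zpow_add₀ hy, zpow_natCast, zpow_one]
  ring

theorem monomial_mem_code {i : ℤ} (hq : q ≠ 0) (e : ℕ × ℤ) (hpole : poleOrder q e ≤ i)
    (horigin : -1 ≤ originOrder q e) : monomial q F e ∈ hermitianTwoPointCode q F i := by
  obtain ⟨α, β⟩ := e
  induction α using Nat.strong_induction_on generalizing β with
  | _ α ih =>
    simp only [poleOrder, originOrder] at hpole horigin
    by_cases hα : α ≤ q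
    · refine Submodule.subset_span ⟨α, β, hα, ?_, hpole, horigin, rfl⟩
      -- `-1 ≤ β` is forced by `α ≤ q` and `-1 ≤ α + (q + 1)β`.
      by_contra! hβ
      nlinarith
    · obtain ⟨α, rfl⟩ : ∃ α', α = α' + (q + 1) := ⟨α - (q + 1), by omega⟩
      have hq1 : (1 : ℤ) ≤ q := by exact_mod_cast Nat.one_le_iff_ne_zero.2 hq
      push_cast at hpole horigin
      rw [monomial_reduce α β hq]
      refine add_mem (ih α (by omega) _ ?_ ?_) (ih α (by omega) _ ?_ ?_) <;>
        simp only [poleOrder, originOrder] <;> nlinarith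

variable [Fintype F] [DecidableEq F] {i : ℤ} {c : HermitianPoints' q F → F}

theorem dotProduct_monomial_ne_zero_of_fst_le
    (hker : ∀ v ∈ hermitianTwoPointCode q F i, c ⬝ᵥ v = 0)
    (hnz : ∃ w ∈ hermitianTwoPointCode q F (i + 1), c ⬝ᵥ w ≠ 0)
    {e : ℕ × ℤ} (he : e.1 ≤ q) (hpole : poleOrder q e = i + 1) :
    c ⬝ᵥ monomial q F e ≠ 0 := by
  obtain ⟨w, hw, hcw⟩ := hnz
  have hcode : hermitianTwoPointCode q F (i + 1) ≤
      hermitianTwoPointCode q F i ⊔ Submodule.span F {monomial q F e} := by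
    refine Submodule.span_le.2 ?_
    rintro v ⟨α, β, hα, hβ, hvpole, hvorigin, rfl⟩
    rcases hvpole.lt_or_eq with hlt | heq
    · exact Submodule.mem_sup_left
        (Submodule.subset_span ⟨α, β, hα, hβ, Int.lt_add_one_iff.1 hlt, hvorigin, rfl⟩)
    · obtain rfl : (α, β) = e := poleOrder_injOn q hα he (heq.trans hpole.symm)
      exact Submodule.mem_sup_right (Submodule.mem_span_singleton_self _)
  obtain ⟨u, hu, z, hz, rfl⟩ := Submodule.mem_sup.1 (hcode hw)
  obtain ⟨t, rfl⟩ := Submodule.mem_span_singleton.1 hz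
  intro hce
  apply hcw
  rw [dotProduct_add, dotProduct_smul, hker u hu, hce, smul_zero, add_zero]

theorem dotProduct_monomial_ne_zero (hq : 2 ≤ q)
    (hker : ∀ v ∈ hermitianTwoPointCode q F i, c ⬝ᵥ v = 0)
    (hnz : ∃ w ∈ hermitianTwoPointCode q F (i + 1), c ⬝ᵥ w ≠ 0)
    (e : ℕ × ℤ) (hpole : poleOrder q e = i + 1) (horigin : -1 ≤ originOrder q e) :
    c ⬝ᵥ monomial q F e ≠ 0 := by
  obtain ⟨α, β⟩ := e
  induction α using Nat.strong_induction_on generalizing β with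
  | _ α ih =>
    by_cases hα : α ≤ q
    · exact dotProduct_monomial_ne_zero_of_fst_le hker hnz hα hpole
    · obtain ⟨α, rfl⟩ : ∃ α', α = α' + (q + 1) := ⟨α - (q + 1), by omega⟩
      simp only [poleOrder, originOrder] at hpole horigin
      push_cast at hpole horigin
      have hq' : (2 : ℤ) ≤ q := by exact_mod_cast hq
      have hlower : c ⬝ᵥ monomial q F (α, β + 1) = 0 :=
        hker _ (monomial_mem_code (by omega) _
          (by simp only [poleOrder]; nlinarith) (by simp only [originOrder]; linarith))
      rw [monomial_reduce α β (by omega), dotProduct_add, hlower, add_zero]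
      exact ih α (by omega) _ (by simp only [poleOrder]; linarith)
        (by simp only [originOrder]; nlinarith)

theorem card_le_card_ne_zero (hq : 2 ≤ q)
    (hker : ∀ v ∈ hermitianTwoPointCode q F i, c ⬝ᵥ v = 0)
    (hnz : ∃ w ∈ hermitianTwoPointCode q F (i + 1), c ⬝ᵥ w ≠ 0)
    (T : Finset (ℕ × ℤ)) (hT : ∀ t ∈ T, t.1 ≤ q ∧ 0 ≤ t.2) (s : ℕ × ℤ → ℕ × ℤ)
    (hpole : ∀ t ∈ T, poleOrder q (t + s t) = i + 1)
    (horigin : ∀ t ∈ T, -1 ≤ originOrder q (s t)) :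
    T.card ≤ Nat.card {P : HermitianPoints' q F // c P ≠ 0} := by
  have hq0 : q ≠ 0 := by omega
  have horigin_row : ∀ t ∈ T, 0 ≤ originOrder q t := fun t ht => by
    unfold originOrder
    exact add_nonneg (by positivity) (mul_nonneg (by positivity) (hT t ht).2)
  let _ : LinearOrder T := LinearOrder.lift' (fun t => poleOrder q t.1)
    fun t t' h => Subtype.ext (poleOrder_injOn q (hT t t.2).1 (hT t' t'.2).1 h)
  have h := card_le_card_ne_zero_of_lowerTriangular c (fun t : T => monomial q F t.1)
    (fun t : T => monomial q F (s t.1)) (fun t t' hlt => by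
      rw [← monomial_add hq0]
      refine hker _ (monomial_mem_code hq0 _ ?_ ?_)
      · have := hpole t' t'.2
        rw [poleOrder_add] at this ⊢
        change poleOrder q t < poleOrder q t' at hlt
        linarith
      · rw [originOrder_add]
        linarith [horigin_row t t.2, horigin t' t'.2])
    (fun t : T => by
      rw [← monomial_add hq0]
      exact dotProduct_monomial_ne_zero hq hker hnz _ (hpole t t.2)
        (by rw [originOrder_add]; linarith [horigin_row t t.2, horigin t t.2]))
  rwa [Fintype.card_coe, ← Nat.card_eq_fintype_card] at h

-- The row `x^u y^v` is paired with the cofactor of `x^(a-1) y^(e-1)`, of pole order `i + 1`.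
theorem mul_le_card_ne_zero (hq : 2 ≤ q)
    (hker : ∀ v ∈ hermitianTwoPointCode q F i, c ⬝ᵥ v = 0)
    (hnz : ∃ w ∈ hermitianTwoPointCode q F (i + 1), c ⬝ᵥ w ≠ 0)
    {a : ℕ} (ha : a ≤ q) (e : ℤ) (hi : i + 1 = q * ((a : ℤ) - 1) + (q + 1) * (e - 1)) :
    (a : ℤ) * e ≤ Nat.card {P : HermitianPoints' q F // c P ≠ 0} := by
  have hmem : ∀ t ∈ Finset.range a ×ˢ Finset.Ico 0 e, t.1 < a ∧ 0 ≤ t.2 ∧ t.2 < e := by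
    simp only [Finset.mem_product, Finset.mem_range, Finset.mem_Ico]
    tauto
  have hcard := card_le_card_ne_zero hq hker hnz (Finset.range a ×ˢ Finset.Ico 0 e)
    (fun t ht => by have := hmem t ht; omega)
    (fun t => (a - 1 - t.1, e - 1 - t.2))
    (fun t ht => by
      have := hmem t ht
      have hfst : ((t.1 + (a - 1 - t.1) : ℕ) : ℤ) = a - 1 := by omega
      simp only [poleOrder, Prod.fst_add, Prod.snd_add, hfst]
      linear_combination -hi)
    (fun t ht => by
      obtain ⟨-, -, hv⟩ := hmem t ht
      simp only [originOrder]
      nlinarith)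
  rw [Finset.card_product, Finset.card_range, Int.card_Ico, sub_zero] at hcard
  calc (a : ℤ) * e ≤ a * e.toNat := mul_le_mul_of_nonneg_left (Int.self_le_toNat e) (by positivity)
    _ ≤ _ := by exact_mod_cast hcard

noncomputable def staircase (q a : ℕ) (d : ℤ) : Finset (ℕ × ℤ) :=
  insert (a, d - a) (Finset.range a ×ˢ Finset.Ico 0 (d + q - a) ∪
    Finset.Ico a (q + 1) ×ˢ Finset.Ico 0 (d - a))

theorem mem_staircase {q a : ℕ} {d : ℤ} {t : ℕ × ℤ} :
    t ∈ staircase q a d ↔ (t.1 = a ∧ t.2 = d - a) ∨ (t.1 < a ∧ 0 ≤ t.2 ∧ t.2 < d + q - a) ∨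
      (a ≤ t.1 ∧ t.1 ≤ q ∧ 0 ≤ t.2 ∧ t.2 < d - a) := by
  obtain ⟨u, v⟩ := t
  simp only [staircase, Finset.mem_insert, Finset.mem_union, Finset.mem_product,
    Finset.mem_range, Finset.mem_Ico, Prod.mk.injEq]
  omega

theorem card_staircase {q a : ℕ} {d : ℤ} (ha : a ≤ q) (had : a ≤ d) :
    ((staircase q a d).card : ℤ) = (q + 1) * d - a + 1 := by
  have hdisj : Disjoint (Finset.range a ×ˢ Finset.Ico 0 (d + q - a))
      (Finset.Ico a (q + 1) ×ˢ Finset.Ico 0 (d - a)) := by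
    simp only [Finset.disjoint_left, Finset.mem_product, Finset.mem_range, Finset.mem_Ico]
    omega
  have hcorner : (a, d - a) ∉ Finset.range a ×ˢ Finset.Ico 0 (d + q - a) ∪
      Finset.Ico a (q + 1) ×ˢ Finset.Ico 0 (d - a) := by
    simp only [Finset.mem_union, Finset.mem_product, Finset.mem_range, Finset.mem_Ico]
    omega
  rw [staircase, Finset.card_insert_of_notMem hcorner, Finset.card_union_of_disjoint hdisj,
    Finset.card_product, Finset.card_product, Finset.card_range, Nat.card_Ico, Int.card_Ico,
    Int.card_Ico, sub_zero, sub_zero]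
  push_cast [ha.trans q.le_succ, Int.toNat_of_nonneg (by omega : 0 ≤ d + q - a),
    Int.toNat_of_nonneg (by omega : 0 ≤ d - a)]
  ring

-- A row `x^u y^v` with `u < a` is paired with the cofactor of `x^(a-1) y^(d+q-1-a)`, any other row
-- with the cofactor of `x^(a+q) y^(d-1-a)`; the corner `(a, d - a)` gets `x^q / y`.
theorem le_card_ne_zero_of_le (hq : 2 ≤ q)
    (hker : ∀ v ∈ hermitianTwoPointCode q F i, c ⬝ᵥ v = 0)
    (hnz : ∃ w ∈ hermitianTwoPointCode q F (i + 1), c ⬝ᵥ w ≠ 0)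
    {a : ℕ} (ha : a ≤ q) {d : ℤ} (had : a ≤ d) (hi : i = (d + q - 2) * (q + 1) - a) :
    (q + 1) * d - a + 1 ≤ (Nat.card {P : HermitianPoints' q F // c P ≠ 0} : ℤ) := by
  rw [← card_staircase ha had]
  refine Nat.cast_le.2 (card_le_card_ne_zero hq hker hnz (staircase q a d)
    (fun t ht => by have := mem_staircase.1 ht; omega)
    (fun t => if t.1 < a then (a - 1 - t.1, d + q - 1 - a - t.2)
      else (a + q - t.1, d - 1 - a - t.2)) (fun t ht => ?_) (fun t ht => ?_))
  · by_cases hu : t.1 < a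
    · have hfst : ((t.1 + (a - 1 - t.1) : ℕ) : ℤ) = a - 1 := by omega
      simp only [if_pos hu, poleOrder, Prod.fst_add, Prod.snd_add, hfst]
      linear_combination -hi
    · have hu' : t.1 ≤ q := by have := mem_staircase.1 ht; omega
      have hfst : ((t.1 + (a + q - t.1) : ℕ) : ℤ) = a + q := by omega
      simp only [if_neg hu, poleOrder, Prod.fst_add, Prod.snd_add, hfst]
      linear_combination -hi
  · rcases mem_staircase.1 ht with ⟨hu, hv⟩ | ⟨hu, -, hv⟩ | ⟨hu, hu', -, hv⟩
    · simp only [hu, lt_irrefl, if_false, hv, originOrder, Nat.add_sub_cancel_left]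
      linarith
    · simp only [if_pos hu, originOrder]
      nlinarith
    · have hfst : ((a + q - t.1 : ℕ) : ℤ) = a + q - t.1 := by omega
      simp only [if_neg hu.not_gt, originOrder, hfst]
      nlinarith

end HermitianCurve

theorem hermitian_two_point_coset_bound_general (q : ℕ) (hq : IsPrimePow q)
    (F : Type*) [Field F] [Fintype F] [DecidableEq F]
    (i d a : ℤ) (hi : i = (d + q - 2) * (q + 1) - a) (ha0 : 0 ≤ a) (haq : a ≤ q)
    (c : HermitianPoints' q F → F)
    (hker : ∀ v ∈ hermitianTwoPointCode q F i, ∑ P, c P * v P = 0)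
    (hnz : ∃ w ∈ hermitianTwoPointCode q F (i + 1), ∑ P, c P * w P ≠ 0) :
    (a - d - 1 < 0 →
      (q + 1) * d - a + 1 ≤ (Nat.card {P : HermitianPoints' q F // c P ≠ 0} : ℤ)) ∧
    (0 ≤ a - d - 1 ∧ a - d - 1 ≤ (q : ℤ) - 1 →
      a * (q - a + d) ≤ (Nat.card {P : HermitianPoints' q F // c P ≠ 0} : ℤ)) := by
  lift a to ℕ using ha0
  have hq2 := hq.two_le
  have haq' : a ≤ q := by exact_mod_cast haq
  exact ⟨fun had => HermitianCurve.le_card_ne_zero_of_le hq2 hker hnz haq' (by omega) hi,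
    fun _ => HermitianCurve.mul_le_card_ne_zero hq2 hker hnz haq' _ (by rw [hi]; ring)⟩

/-- Two-point coset bound for Hermitian codes: if `c` is orthogonal to
`C_L(D, iP + Q)` but not to `C_L(D, (i+1)P + Q)`, and `i = (d+q-2)(q+1) - a`
with `0 ≤ a ≤ q`, then the Hamming weight of `c` is at least `(q+1)d - a + 1`
when `a - d - 1 < 0`, and at least `a(q - a + d)` when `0 ≤ a - d - 1 ≤ q - 1`. -/
theorem hermitian_two_point_coset_bound (q : ℕ) (hq : IsPrimePow q)
    (F : Type*) [Field F] [Fintype F] [DecidableEq F] (hF : Fintype.card F = q ^ 2)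
    (i d a : ℤ) (hi : i = (d + q - 2) * (q + 1) - a) (ha0 : 0 ≤ a) (haq : a ≤ q)
    (c : HermitianPoints' q F → F)
    (hker : ∀ v ∈ hermitianTwoPointCode q F i, ∑ P, c P * v P = 0)
    (hnz : ∃ w ∈ hermitianTwoPointCode q F (i + 1), ∑ P, c P * w P ≠ 0) :
    (a - d - 1 < 0 →
      (q + 1) * d - a + 1 ≤ (Nat.card {P : HermitianPoints' q F // c P ≠ 0} : ℤ)) ∧
    (0 ≤ a - d - 1 ∧ a - d - 1 ≤ (q : ℤ) - 1 →
      a * (q - a + d) ≤ (Nat.card {P : HermitianPoints' q F // c P ≠ 0} : ℤ)) :=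
  hermitian_two_point_coset_bound_general q hq F i d a hi ha0 haq c hker hnz
end

section
/- Redundancy comparison of improved one-point and two-point Hermitian codes (Corollary 4). Fix an integer q ≥ 2. For i ∈ ℤ write i = (d+q−2)(q+1) − a with the unique integers d ∈ ℤ and 0 ≤ a ≤ q, and define the one-point coset bound B(i) = (q+1)d − a if a − d < 0, B(i) = a(q − a + d) if 0 ≤ a − d ≤ q−1, and B(i) = 0 otherwise; define the two-point coset bound B'(i) = (q+1)d − a + 1 if d > q−1, B'(i) = qd + q − a if a ≤ d ≤ q−1, B'(i) = a(q − a + d) if 0 ≤ a − d − 1 ≤ q−1, and B'(i) = 0 otherwise. For an integer δ define the redundancies r(δ) = |{i ∈ ℤ : i ≥ −1 and 0 < B(i) < δ}| and r'(δ) = |{i ∈ ℤ : i ≥ −1 and 0 < B'(i) < δ}|. Then for every δ = dq + b with integers 0 < d ≤ q−1 and 0 < b ≤ q, one has r(δ) − r'(δ) = b−1 if b ≤ d ≤ q−b; = q−d−1 if b ≤ d and q−b < d; = q−b if q−b < d < b; and = d if d < b and d ≤ q−b. -/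
/-!
Write `i = (m + q - 2)(q + 1) - a` with `0 ≤ a ≤ q`. The two coset bounds agree when `m < a`,
both are at least `q²` when `m ≥ q`, and on the remaining triangle `0 ≤ a ≤ m ≤ q - 1` they are
`B = (q + 1)m - a < B' = qm + q - a`. Hence, for `δ = dq + b`, the indices counted by `r δ` but not
by `r' δ` are those with `m = d` and `max 0 (d - b + 1) ≤ a ≤ min d (q - b)`, and the only index
counted by `r' δ` but not by `r δ` is `m = a = 0`, where `B = 0 < q = B'`. Therefore
`r δ - r' δ = min d (q - b) - max 0 (d - b + 1)`, which is the four-case formula.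
-/

open Set

theorem ncard_sub_ncard_eq_ncard_sdiff_sub_ncard_sdiff {α : Type*} {s t : Set α}
    (hs : s.Finite) (ht : t.Finite) :
    (s.ncard : ℤ) - t.ncard = (s \ t).ncard - (t \ s).ncard := by
  have hst := ncard_inter_add_ncard_sdiff_eq_ncard s t hs
  have hts := ncard_inter_add_ncard_sdiff_eq_ncard t s ht
  rw [inter_comm] at hts
  omega

namespace Hermitian

def onePointBound (q m a : ℤ) : ℤ :=
  if a - m < 0 then (q + 1) * m - a
  else if 0 ≤ a - m ∧ a - m ≤ q - 1 then a * (q - a + m)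
  else 0

def twoPointBound (q m a : ℤ) : ℤ :=
  if q - 1 < m then (q + 1) * m - a + 1
  else if a ≤ m ∧ m ≤ q - 1 then q * m + q - a
  else if 0 ≤ a - m - 1 ∧ a - m - 1 ≤ q - 1 then a * (q - a + m)
  else 0

def HasCoordForm (q : ℤ) (F : ℤ → ℤ → ℤ) (B : ℤ → ℤ) : Prop :=
  ∀ i m a, i = (m + q - 2) * (q + 1) - a → 0 ≤ a → a ≤ q → B i = F m a

def redundancySet (B : ℤ → ℤ) (δ : ℤ) : Set ℤ :=
  {i | -1 ≤ i ∧ 0 < B i ∧ B i < δ}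

variable {q m a : ℤ}

theorem exists_eq_sub (hq : 0 ≤ q) (i : ℤ) :
    ∃ m a : ℤ, i = (m + q - 2) * (q + 1) - a ∧ 0 ≤ a ∧ a ≤ q := by
  refine ⟨-((-i) / (q + 1)) - q + 2, (-i) % (q + 1), ?_, Int.emod_nonneg _ (by omega), ?_⟩
  · linear_combination Int.mul_ediv_add_emod (-i) (q + 1)
  · have := Int.emod_lt_of_pos (-i) (show 0 < q + 1 by omega)
    omega

theorem onePointBound_of_le (hq : 1 ≤ q) (h : a ≤ m) :
    onePointBound q m a = (q + 1) * m - a := by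
  unfold onePointBound
  split_ifs
  · rfl
  · obtain rfl : a = m := by omega
    ring
  · omega

theorem twoPointBound_of_le (h : q ≤ m) : twoPointBound q m a = (q + 1) * m - a + 1 :=
  if_pos (by omega)

theorem twoPointBound_of_le_of_lt (h : a ≤ m) (hm : m < q) :
    twoPointBound q m a = q * m + q - a := by
  unfold twoPointBound
  rw [if_neg (by omega), if_pos ⟨h, by omega⟩]

theorem twoPointBound_of_lt (h : m < a) (ha : a ≤ q) :
    twoPointBound q m a = onePointBound q m a := by
  unfold twoPointBound onePointBound
  rw [if_neg (show ¬q - 1 < m by omega), if_neg (show ¬(a ≤ m ∧ m ≤ q - 1) by omega),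
    if_neg (show ¬a - m < 0 by omega)]
  split_ifs <;> first | rfl | omega | simp [show q - a + m = 0 by omega]

theorem onePointBound_mem_Ioo_and_twoPointBound_notMem_iff {d b : ℤ}
    (hd0 : 0 < d) (hdq : d < q) (hb0 : 0 < b) (hbq : b ≤ q) (ha0 : 0 ≤ a) (haq : a ≤ q) :
    onePointBound q m a ∈ Ioo 0 (d * q + b) ∧ twoPointBound q m a ∉ Ioo 0 (d * q + b) ↔
      m = d ∧ max 0 (d - b + 1) ≤ a ∧ a ≤ min d (q - b) := by
  rcases lt_or_ge m a with hma | ham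
  · rw [twoPointBound_of_lt hma haq]
    exact ⟨fun h => absurd h.1 h.2, by omega⟩
  rw [onePointBound_of_le (by omega) ham]
  have hcomm : q * m = m * q := mul_comm q m
  have hexpand : (q + 1) * m = m * q + m := by ring
  rcases lt_or_ge m q with hm | hm
  · rw [twoPointBound_of_le_of_lt ham hm]
    simp only [mem_Ioo, not_and_or, not_lt]
    constructor
    · rintro ⟨⟨-, hlt⟩, hge⟩
      have : 0 ≤ q * m := mul_nonneg (by omega) (by omega)
      have hge : d * q + b ≤ q * m + q - a := by omega
      obtain rfl : m = d := by
        have := lt_of_mul_lt_mul_left (show q * d < q * (m + 1) by linarith) (by omega)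
        have := lt_of_mul_lt_mul_left (show q * m < q * (d + 1) by linarith) (by omega)
        omega
      omega
    · rintro ⟨rfl, hlow, hup⟩
      refine ⟨⟨by nlinarith, by omega⟩, Or.inr (by omega)⟩
  · have : q * q ≤ q * m := mul_le_mul_of_nonneg_left hm (by omega)
    have : d * q + b ≤ q * q := by nlinarith
    simp only [mem_Ioo]
    constructor
    · rintro ⟨⟨-, h⟩, -⟩
      linarith
    · omega

theorem twoPointBound_mem_Ioo_and_onePointBound_notMem_iff {δ : ℤ} (hq : 1 ≤ q)
    (hqδ : q < δ) (hδq : δ ≤ q * q) (ha0 : 0 ≤ a) (haq : a ≤ q) :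
    twoPointBound q m a ∈ Ioo 0 δ ∧ onePointBound q m a ∉ Ioo 0 δ ↔ m = 0 ∧ a = 0 := by
  rcases lt_or_ge m a with hma | ham
  · rw [twoPointBound_of_lt hma haq]
    exact ⟨fun h => absurd h.1 h.2, by omega⟩
  rw [onePointBound_of_le hq ham]
  rcases lt_or_ge m q with hm | hm
  · rw [twoPointBound_of_le_of_lt ham hm]
    simp only [mem_Ioo, not_and_or, not_lt]
    constructor
    · rintro ⟨⟨-, hlt⟩, hle⟩
      have : (q + 1) * m = q * m + m := by ring
      have : (q + 1) * m - a ≤ 0 := by omega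
      have : m ≤ 0 := by nlinarith
      omega
    · rintro ⟨rfl, rfl⟩
      exact ⟨⟨by omega, by omega⟩, Or.inl (by omega)⟩
  · rw [twoPointBound_of_le hm]
    have : q * q ≤ q * m := mul_le_mul_of_nonneg_left hm (by omega)
    simp only [mem_Ioo]
    constructor
    · rintro ⟨⟨-, h⟩, -⟩
      linarith
    · omega

theorem finite_redundancySet (hq : 1 ≤ q) {B : ℤ → ℤ} (hB : HasCoordForm q (onePointBound q) B)
    (δ : ℤ) : (redundancySet B δ).Finite := by
  refine (((finite_Icc (2 - q) (max q δ)).prod (finite_Icc 0 q)).image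
    fun p : ℤ × ℤ => (p.1 + q - 2) * (q + 1) - p.2).subset ?_
  rintro i ⟨hi, -, hBi⟩
  obtain ⟨m, a, rfl, ha0, haq⟩ := exists_eq_sub (q := q) (by omega) i
  refine ⟨(m, a), ⟨⟨?_, ?_⟩, ha0, haq⟩, rfl⟩
  · by_contra! hm
    nlinarith
  · rcases le_or_gt m q with hmq | hqm
    · exact le_max_of_le_left hmq
    · rw [hB _ m a rfl ha0 haq, onePointBound_of_le hq (by omega)] at hBi
      nlinarith [le_max_right q δ]

theorem redundancySet_sdiff_eq_Icc {d b : ℤ} {B B' : ℤ → ℤ}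
    (hB : HasCoordForm q (onePointBound q) B) (hB' : HasCoordForm q (twoPointBound q) B')
    (hd0 : 0 < d) (hdq : d < q) (hb0 : 0 < b) (hbq : b ≤ q) :
    redundancySet B (d * q + b) \ redundancySet B' (d * q + b) =
      Icc ((d + q - 2) * (q + 1) - min d (q - b)) ((d + q - 2) * (q + 1) - max 0 (d - b + 1)) := by
  ext i
  simp only [redundancySet, mem_sdiff, mem_ofPred_eq, mem_Icc]
  constructor
  · rintro ⟨⟨hi, hBi⟩, hB'i⟩
    obtain ⟨m, a, rfl, ha0, haq⟩ := exists_eq_sub (q := q) (by omega) i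
    rw [hB _ m a rfl ha0 haq] at hBi
    rw [hB' _ m a rfl ha0 haq] at hB'i
    obtain ⟨rfl, hlow, hup⟩ := (onePointBound_mem_Ioo_and_twoPointBound_notMem_iff hd0 hdq hb0 hbq
      ha0 haq).mp ⟨hBi, fun h => hB'i ⟨hi, h⟩⟩
    omega
  · rintro ⟨hlow, hup⟩
    obtain ⟨a, rfl⟩ : ∃ a, i = (d + q - 2) * (q + 1) - a := ⟨_, (sub_sub_cancel _ i).symm⟩
    have ha0 : 0 ≤ a := by omega
    have haq : a ≤ q := by omega
    obtain ⟨hBi, hB'i⟩ := (onePointBound_mem_Ioo_and_twoPointBound_notMem_iff hd0 hdq hb0 hbq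
      ha0 haq).mpr ⟨rfl, by omega, by omega⟩
    rw [hB _ d a rfl ha0 haq, hB' _ d a rfl ha0 haq]
    have hi : -1 ≤ (d + q - 2) * (q + 1) - a := by nlinarith
    exact ⟨⟨hi, hBi⟩, fun h => hB'i h.2⟩

theorem redundancySet_sdiff_eq_singleton {δ : ℤ} {B B' : ℤ → ℤ} (hq : 2 ≤ q)
    (hB : HasCoordForm q (onePointBound q) B) (hB' : HasCoordForm q (twoPointBound q) B')
    (hqδ : q < δ) (hδq : δ ≤ q * q) :
    redundancySet B' δ \ redundancySet B δ = {(q - 2) * (q + 1)} := by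
  ext i
  simp only [redundancySet, mem_sdiff, mem_ofPred_eq, mem_singleton_iff]
  constructor
  · rintro ⟨⟨hi, hB'i⟩, hBi⟩
    obtain ⟨m, a, rfl, ha0, haq⟩ := exists_eq_sub (q := q) (by omega) i
    rw [hB _ m a rfl ha0 haq] at hBi
    rw [hB' _ m a rfl ha0 haq] at hB'i
    obtain ⟨rfl, rfl⟩ := (twoPointBound_mem_Ioo_and_onePointBound_notMem_iff (by omega) hqδ hδq
      ha0 haq).mp ⟨hB'i, fun h => hBi ⟨hi, h⟩⟩
    ring
  · rintro rfl
    have hi : (q - 2) * (q + 1) = (0 + q - 2) * (q + 1) - 0 := by ring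
    obtain ⟨hB'i, hBi⟩ := (twoPointBound_mem_Ioo_and_onePointBound_notMem_iff (by omega) hqδ hδq
      le_rfl (by omega)).mpr ⟨rfl, rfl⟩
    rw [hB _ 0 0 hi le_rfl (by omega), hB' _ 0 0 hi le_rfl (by omega)]
    exact ⟨⟨by nlinarith, hB'i⟩, fun h => hBi h.2⟩

end Hermitian

open Hermitian

/-- Redundancy comparison of improved one-point and two-point Hermitian codes.
`B` is the one-point coset bound and `B'` the improved two-point coset bound,
specified on `i = (d+q-2)(q+1) - a` with `0 ≤ a ≤ q`; `r δ` and `r' δ` count the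
indices `i ≥ -1` whose coset bound is strictly between `0` and `δ`. For
`δ = dq + b` with `0 < d ≤ q-1` and `0 < b ≤ q`, the difference `r δ - r' δ`
is given by the four-case formula. -/
theorem hermitian_redundancy_difference (q : ℤ) (hq : 2 ≤ q)
    (B B' : ℤ → ℤ)
    (hB : ∀ i d a : ℤ, i = (d + q - 2) * (q + 1) - a → 0 ≤ a → a ≤ q →
      B i = if a - d < 0 then (q + 1) * d - a
            else if 0 ≤ a - d ∧ a - d ≤ q - 1 then a * (q - a + d)
            else 0)
    (hB' : ∀ i d a : ℤ, i = (d + q - 2) * (q + 1) - a → 0 ≤ a → a ≤ q →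
      B' i = if q - 1 < d then (q + 1) * d - a + 1
             else if a ≤ d ∧ d ≤ q - 1 then q * d + q - a
             else if 0 ≤ a - d - 1 ∧ a - d - 1 ≤ q - 1 then a * (q - a + d)
             else 0)
    (r r' : ℤ → ℕ)
    (hr : ∀ δ : ℤ, r δ = Nat.card {i : ℤ // -1 ≤ i ∧ 0 < B i ∧ B i < δ})
    (hr' : ∀ δ : ℤ, r' δ = Nat.card {i : ℤ // -1 ≤ i ∧ 0 < B' i ∧ B' i < δ})
    (δ d b : ℤ) (hd0 : 0 < d) (hdq : d ≤ q - 1) (hb0 : 0 < b) (hbq : b ≤ q)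
    (hδ : δ = d * q + b) :
    (b ≤ d ∧ d ≤ q - b → (r δ : ℤ) - (r' δ : ℤ) = b - 1) ∧
    (b ≤ d ∧ q - b < d → (r δ : ℤ) - (r' δ : ℤ) = q - d - 1) ∧
    (q - b < d ∧ d < b → (r δ : ℤ) - (r' δ : ℤ) = q - b) ∧
    (d < b ∧ d ≤ q - b → (r δ : ℤ) - (r' δ : ℤ) = d) := by
  subst hδ
  have hqδ : q < d * q + b := by nlinarith
  have hδq : d * q + b ≤ q * q := by nlinarith
  have hSS' := redundancySet_sdiff_eq_Icc hB hB' hd0 (by omega) hb0 hbq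
  have hS'S := redundancySet_sdiff_eq_singleton hq hB hB' hqδ hδq
  have hS := finite_redundancySet (by omega) hB (d * q + b)
  have hS' : (redundancySet B' (d * q + b)).Finite :=
    (hS.union (hS'S ▸ finite_singleton _)).subset (sdiff_subset_iff.mp subset_rfl)
  have hdiff : (r (d * q + b) : ℤ) - r' (d * q + b) = min d (q - b) - max 0 (d - b + 1) := by
    rw [hr, hr']
    change ((redundancySet B _).ncard : ℤ) - (redundancySet B' _).ncard = _
    rw [ncard_sub_ncard_eq_ncard_sdiff_sub_ncard_sdiff hS hS', hSS', hS'S, ← Finset.coe_Icc,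
      ncard_coe_finset, Int.card_Icc, ncard_singleton]
    omega
  refine ⟨fun _ => ?_, fun _ => ?_, fun _ => ?_, fun _ => ?_⟩ <;> omega
end

section
/- Maximal redundancy gain (Example 1): let q ≥ 2 be an even integer, and for integers 0 < d ≤ q−1, 0 < b ≤ q define f(d,b) = b−1 if b ≤ d ≤ q−b; = q−d−1 if b ≤ d and q−b < d; = q−b if q−b < d < b; and = d if d < b and d ≤ q−b. Then f(q/2, q/2) = q/2 − 1, and f(d,b) ≤ q/2 − 1 for all integers d, b with 0 < d ≤ q−1 and 0 < b ≤ q. Hence for designed distance δ = q(q+1)/2 the two-point improved Hermitian code has redundancy q/2 − 1 less than the one-point improved code, and this is the maximum possible difference. -/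
/-- The redundancy difference `r_{G_i}(δ) - r_{G'_i}(δ)` between improved
one-point and improved two-point Hermitian codes for designed distance
`δ = dq + b`, with `0 < d ≤ q-1` and `0 < b ≤ q`. -/
def redundancyDiff (q d b : ℤ) : ℤ :=
  if b ≤ d ∧ d ≤ q - b then b - 1
  else if b ≤ d ∧ q - b < d then q - d - 1
  else if q - b < d ∧ d < b then q - b
  else d

/-- Maximal redundancy gain: for even `q ≥ 2`, the redundancy difference at
`d = b = q/2` (i.e. designed distance `δ = q(q+1)/2`) equals `q/2 - 1`, and
this is the maximum over all admissible `(d, b)`. -/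
theorem hermitian_max_redundancy_gain (q : ℤ) (hq : 2 ≤ q) (hq2 : Even q) :
    redundancyDiff q (q / 2) (q / 2) = q / 2 - 1 ∧
      ∀ d b : ℤ, 0 < d → d ≤ q - 1 → 0 < b → b ≤ q →
        redundancyDiff q d b ≤ q / 2 - 1 := by
  obtain ⟨k, hk⟩ := hq2
  constructor
  · unfold redundancyDiff
    split <;> omega
  · intro d b h1 h2 h3 h4
    unfold redundancyDiff
    split
    · omega
    · split
      · omega
      · split <;> omega
end

section
/- Let q ≥ 2 be an integer, and for integers 0 < d ≤ q−1, 0 < b ≤ q define f(d,b) = b−1 if b ≤ d ≤ q−b; = q−d−1 if b ≤ d and q−b < d; = q−b if q−b < d < b; and = d if d < b and d ≤ q−b. Then the number of pairs (d,b) with 0 < d ≤ q−1, 0 < b ≤ q and f(d,b) = 0 equals 3q − 4. (That is, there are exactly 3q−4 designed distances δ = dq+b in the range considered for which the two-point improved Hermitian code has the same redundancy as the one-point improved code.) -/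
open Finset

theorem redundancyDiff_eq_zero_iff {q d b : ℤ} (hd : 0 < d) (hdq : d ≤ q - 1) (hb : 0 < b)
    (hbq : b ≤ q) : redundancyDiff q d b = 0 ↔ d = q - 1 ∨ b = 1 ∨ b = q := by
  unfold redundancyDiff
  split_ifs <;> omega

theorem mem_zeroGainPairs_iff {q : ℤ} (hq : 2 ≤ q) {p : ℤ × ℤ} :
    p ∈ Icc 1 (q - 2) ×ˢ {1, q} ∪ {q - 1} ×ˢ Icc 1 q ↔
      0 < p.1 ∧ p.1 ≤ q - 1 ∧ 0 < p.2 ∧ p.2 ≤ q ∧ redundancyDiff q p.1 p.2 = 0 := by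
  obtain ⟨d, b⟩ := p
  simp only [mem_union, mem_product, mem_Icc, mem_insert, mem_singleton]
  constructor
  · intro h
    obtain ⟨hd, hdq, hb, hbq⟩ : 0 < d ∧ d ≤ q - 1 ∧ 0 < b ∧ b ≤ q := by omega
    exact ⟨hd, hdq, hb, hbq, (redundancyDiff_eq_zero_iff hd hdq hb hbq).2 (by omega)⟩
  · rintro ⟨hd, hdq, hb, hbq, hzero⟩
    have := (redundancyDiff_eq_zero_iff hd hdq hb hbq).1 hzero
    omega

theorem card_zeroGainPairs {q : ℤ} (hq : 2 ≤ q) :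
    (#(Icc 1 (q - 2) ×ˢ {1, q} ∪ {q - 1} ×ˢ Icc 1 q) : ℤ) = 3 * q - 4 := by
  have hdisj : Disjoint (Icc 1 (q - 2) ×ˢ ({1, q} : Finset ℤ)) ({q - 1} ×ˢ Icc 1 q) :=
    disjoint_product.2 <| Or.inl <| disjoint_singleton_right.2 <| by rw [mem_Icc]; omega
  have hpair : #({1, q} : Finset ℤ) = 2 := card_pair (by omega)
  rw [card_union_of_disjoint hdisj, card_product, card_product, hpair, card_singleton,
    Int.card_Icc, Int.card_Icc]
  push_cast
  omega

/-- There are exactly `3q - 4` pairs `(d, b)` with `0 < d ≤ q-1`, `0 < b ≤ q`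
for which the redundancy difference vanishes, i.e. `3q - 4` designed distances
`δ = dq + b` where the two-point improved Hermitian code has the same
redundancy as the one-point improved code. -/
theorem hermitian_zero_gain_count (q : ℤ) (hq : 2 ≤ q) :
    (Nat.card {p : ℤ × ℤ // 0 < p.1 ∧ p.1 ≤ q - 1 ∧ 0 < p.2 ∧ p.2 ≤ q ∧
      redundancyDiff q p.1 p.2 = 0} : ℤ) = 3 * q - 4 := by
  rw [← card_zeroGainPairs hq, ← Nat.card_eq_finsetCard]
  exact congrArg _ <| Nat.card_congr <|
    Equiv.subtypeEquivRight fun _ => (mem_zeroGainPairs_iff hq).symm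
end

section
/- Optimality of the divisor shape aP − 2Q (combinatorial content of Corollary 6): fix an integer q ≥ 1. For integers d ≥ 0 and 0 ≤ a, b ≤ q with (d,a,b) ≠ (0,0,0) and d(q+1) ≥ a + b, define δ(d,a,b) = d(q+1) − a − b + (q − d) if a = q and b = q and d < q, and δ(d,a,b) = d(q+1) − a − b + max(0, a−d) + max(0, b−d) otherwise. Then for every such triple (d,a,b) there exist integers d' ≥ 0 and 0 ≤ a' ≤ q with (d',a',q) ≠ (0,0,0), d'(q+1) ≥ a' + q, d'(q+1) − a' − q = d(q+1) − a − b, and δ(d', a', q) ≥ δ(d,a,b). That is, among all two-point divisors C = dH − aP − bQ of a given degree, the minimum distance formula of Homma–Kim is maximized by one with b = q. -/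
/-- The Homma–Kim minimum distance of the two-point Hermitian code
`C_Ω(D, K + C)` for `C = dH - aP - bQ` with `d ≥ 0`, `0 ≤ a, b ≤ q`:
`deg C + q - d` in the exceptional case `a = b = q`, `d < q`, and
`deg C + max(0, a-d) + max(0, b-d)` otherwise. -/
def hommaKimDistance (q d a b : ℤ) : ℤ :=
  if a = q ∧ b = q ∧ d < q then d * (q + 1) - a - b + (q - d)
  else d * (q + 1) - a - b + max 0 (a - d) + max 0 (b - d)

/-- Optimality of the divisor shape `aP - 2Q`: among all two-point divisors
`C = dH - aP - bQ` of a given degree, the Homma–Kim minimum distance is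
maximized by a divisor with `b = q`. -/
theorem hermitian_two_point_optimal_shape (q : ℤ) (hq : 1 ≤ q)
    (d a b : ℤ) (hd : 0 ≤ d) (ha0 : 0 ≤ a) (haq : a ≤ q) (hb0 : 0 ≤ b) (hbq : b ≤ q)
    (hne : (d, a, b) ≠ (0, 0, 0)) (hdeg : a + b ≤ d * (q + 1)) :
    ∃ d' a' : ℤ, 0 ≤ d' ∧ 0 ≤ a' ∧ a' ≤ q ∧ (d', a', q) ≠ ((0 : ℤ), (0 : ℤ), (0 : ℤ)) ∧
      a' + q ≤ d' * (q + 1) ∧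
      d' * (q + 1) - a' - q = d * (q + 1) - a - b ∧
      hommaKimDistance q d a b ≤ hommaKimDistance q d' a' q := by
  by_cases hb : q - b ≤ a
  · refine ⟨d, a + b - q, hd, by omega, by omega, ?_, by linarith, by ring, ?_⟩
    · simp only [ne_eq, Prod.mk.injEq]; omega
    · unfold hommaKimDistance
      split_ifs <;> [skip; skip; skip; skip] <;>
        (generalize d * (q + 1) = m at *; omega)
  · have hexp : (d + 1) * (q + 1) = d * (q + 1) + q + 1 := by ring
    refine ⟨d + 1, a + b + 1, by omega, by omega, by omega, ?_, by linarith, by ring, ?_⟩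
    · simp only [ne_eq, Prod.mk.injEq]; omega
    · unfold hommaKimDistance
      rw [hexp]
      split_ifs <;> (generalize d * (q + 1) = m at *; omega)
end
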